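/- arXiv:1707.05852 — 8 statements merged into one kernel-verified Lean document; each statement's English description precedes it below -/
import Mathlib

section
/- There exists at least one pair (a*, b*) ∈ ℝⁿ × ℝⁿ that globally minimizes the two-estimator cost J, i.e. J(a*, b*) ≤ J(a, b) for all a, b ∈ ℝⁿ, and the minimal cost satisfies J(a*, b*) < J_MS. -/
/-!
Splitting the mean `m` symmetrically into `m ± c • e`, with `e` a unit vector and
`c = ∫ |⟪e, m - x⟫| dμ`, lowers the cost to `J_MS - c²`; here `c > 0` because `μ` does not charge
the hyperplane `⟪e, x - m⟫ = 0`. The cost is continuous, and its sublevel sets below `J_MS` are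
bounded: if one estimator escapes to infinity while the other stays bounded, the far one only
serves a tail of small mass, so the cost is nearly `∫ ‖a - x‖² dμ ≥ J_MS`; if both escape, a ball
of positive mass is served only from far away. Hence the cost attains its minimum, which is at
most `J_MS - c²`.
-/

open MeasureTheory Metric Filter Topology
open scoped RealInnerProductSpace

lemma tendsto_setIntegral_compl_closedBall {X F : Type*} [PseudoMetricSpace X]
    [MeasurableSpace X] [OpensMeasurableSpace X] [NormedAddCommGroup F] [NormedSpace ℝ F]
    {ν : Measure X} {g : X → F} (hg : Integrable g ν) (c : X) :
    Tendsto (fun R => ∫ x in (closedBall c R)ᶜ, g x ∂ν) atTop (𝓝 0) := by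
  have h := tendsto_setIntegral_of_antitone (μ := ν) (f := g)
    (s := fun R : ℝ => (closedBall c R)ᶜ) (fun R => measurableSet_closedBall.compl)
    (fun R S hRS => Set.compl_subset_compl.2 (closedBall_subset_closedBall hRS))
    ⟨0, hg.integrableOn⟩
  have hempty : ⋂ R : ℝ, (closedBall c R)ᶜ = ∅ :=
    Set.iInter_eq_empty_iff.2 fun x => ⟨dist x c, by simp⟩
  rwa [hempty, Measure.restrict_empty, integral_zero_measure] at h

lemma exists_measure_closedBall_pos {X : Type*} [PseudoMetricSpace X] [MeasurableSpace X]
    {ν : Measure X} [NeZero ν] (c : X) : ∃ R, 0 < ν (closedBall c R) := by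
  by_contra! h
  have huniv : ν Set.univ = 0 := by
    rw [← iUnion_closedBall_nat c]
    exact measure_iUnion_null fun k => nonpos_iff_eq_zero.1 (h k)
  exact NeZero.ne ν (Measure.measure_univ_eq_zero.1 huniv)

variable {E : Type*} [NormedAddCommGroup E]

lemma min_norm_add_sub_sq [InnerProductSpace ℝ E] (m v x : E) :
    min (‖m + v - x‖ ^ 2) (‖m - v - x‖ ^ 2) = ‖v‖ ^ 2 + ‖m - x‖ ^ 2 - 2 * |⟪v, m - x⟫| := by
  have h₁ : ‖m + v - x‖ ^ 2 = ‖v‖ ^ 2 + ‖m - x‖ ^ 2 + 2 * ⟪v, m - x⟫ := by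
    rw [show m + v - x = v + (m - x) by abel, norm_add_sq_real]; ring
  have h₂ : ‖m - v - x‖ ^ 2 = ‖v‖ ^ 2 + ‖m - x‖ ^ 2 - 2 * ⟪v, m - x⟫ := by
    rw [show m - v - x = -v + (m - x) by abel, norm_add_sq_real, norm_neg, inner_neg_left]; ring
  rw [h₁, h₂]
  rcases abs_cases ⟪v, m - x⟫ with ⟨h, hv⟩ | ⟨h, hv⟩
  · rw [h, min_eq_right (by linarith)]
  · rw [h, min_eq_left (by linarith)]; ring

variable [MeasurableSpace E] {μ : Measure E}

noncomputable def pairCost (μ : Measure E) (p : E × E) : ℝ :=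
  ∫ x, min (‖p.1 - x‖ ^ 2) (‖p.2 - x‖ ^ 2) ∂μ

lemma pairCost_swap (p : E × E) : pairCost μ p.swap = pairCost μ p := by
  simp only [pairCost, Prod.fst_swap, Prod.snd_swap, min_comm]

section FiniteMeasure

variable [IsFiniteMeasure μ]

lemma integrable_norm_sub_sq (hX : MemLp id 2 μ) (a : E) :
    Integrable (fun x => ‖a - x‖ ^ 2) μ :=
  ((memLp_const a).sub hX).norm.integrable_sq

lemma integrable_const_add_norm_sq (hX : MemLp id 2 μ) (c : ℝ) :
    Integrable (fun x => (c + ‖x‖) ^ 2) μ :=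
  ((memLp_const c).add hX.norm).integrable_sq

variable [OpensMeasurableSpace E]

lemma integrable_min_norm_sub_sq (hX : MemLp id 2 μ) (p : E × E) :
    Integrable (fun x => min (‖p.1 - x‖ ^ 2) (‖p.2 - x‖ ^ 2)) μ := by
  refine (integrable_norm_sub_sq hX p.1).mono' (by fun_prop) (ae_of_all _ fun x => ?_)
  rw [Real.norm_of_nonneg (by positivity)]
  exact min_le_left _ _

lemma continuous_pairCost (hX : MemLp id 2 μ) : Continuous (pairCost μ) := by
  refine continuous_iff_continuousAt.2 fun p => ?_
  refine tendsto_integral_filter_of_dominated_convergence (fun x => (‖p.1‖ + 1 + ‖x‖) ^ 2)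
    (Eventually.of_forall fun q => (integrable_min_norm_sub_sq hX q).aestronglyMeasurable) ?_
    (integrable_const_add_norm_sq hX _)
    (ae_of_all _ fun x => (by fun_prop : Continuous fun q : E × E =>
      min (‖q.1 - x‖ ^ 2) (‖q.2 - x‖ ^ 2)).tendsto p)
  filter_upwards [ball_mem_nhds p one_pos] with q hq
  refine ae_of_all _ fun x => ?_
  have hq1 : ‖q.1 - p.1‖ < 1 :=
    (norm_fst_le (q - p)).trans_lt (by rwa [← dist_eq_norm, ← mem_ball])
  have hqx : ‖q.1 - x‖ ≤ ‖p.1‖ + 1 + ‖x‖ := by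
    linarith [norm_sub_le q.1 x, norm_sub_norm_le q.1 p.1]
  rw [Real.norm_of_nonneg (by positivity)]
  exact (min_le_left _ _).trans (by gcongr)

lemma integral_norm_sub_sq_sub_tail_le_pairCost (hX : MemLp id 2 μ) {a b : E} {S R : ℝ}
    (ha : ‖a‖ ≤ S) (hb : S + 2 * R < ‖b‖) :
    ∫ x, ‖a - x‖ ^ 2 ∂μ - ∫ x in (closedBall 0 R)ᶜ, (S + ‖x‖) ^ 2 ∂μ ≤ pairCost μ (a, b) := by
  have hball : MeasurableSet (closedBall (0 : E) R)ᶜ := measurableSet_closedBall.compl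
  have htail := (integrable_const_add_norm_sq hX S).indicator hball
  rw [← integral_indicator hball, ← integral_sub (integrable_norm_sub_sq hX a) htail]
  refine integral_mono ((integrable_norm_sub_sq hX a).sub htail)
    (integrable_min_norm_sub_sq hX (a, b)) fun x => ?_
  by_cases hx : x ∈ closedBall (0 : E) R
  · -- near the origin, the far point `b` is never the closer one
    rw [Set.indicator_of_notMem (Set.notMem_compl_iff.2 hx), sub_zero]
    rw [mem_closedBall_zero_iff] at hx
    have hab : ‖a - x‖ ≤ ‖b - x‖ := by
      linarith [norm_sub_le a x, norm_sub_norm_le b x]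
    exact le_min le_rfl (by gcongr)
  · rw [Set.indicator_of_mem hx]
    have hax : ‖a - x‖ ≤ S + ‖x‖ := (norm_sub_le a x).trans (by linarith)
    have hsq : ‖a - x‖ ^ 2 ≤ (S + ‖x‖) ^ 2 := by gcongr
    exact (sub_nonpos.2 hsq).trans (by positivity)

lemma measureReal_closedBall_mul_sq_le_pairCost (hX : MemLp id 2 μ) {a b : E} {R s : ℝ}
    (hRs : R ≤ s) (ha : s ≤ ‖a‖) (hb : s ≤ ‖b‖) :
    μ.real (closedBall 0 R) * (s - R) ^ 2 ≤ pairCost μ (a, b) := by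
  have hmin := integrable_min_norm_sub_sq hX (a, b)
  calc μ.real (closedBall 0 R) * (s - R) ^ 2 = ∫ _ in closedBall 0 R, (s - R) ^ 2 ∂μ := by
        rw [setIntegral_const, smul_eq_mul]
    _ ≤ ∫ x in closedBall 0 R, min (‖a - x‖ ^ 2) (‖b - x‖ ^ 2) ∂μ := by
        refine setIntegral_mono_on (integrableOn_const (measure_ne_top _ _)) hmin.integrableOn
          measurableSet_closedBall fun x hx => ?_
        rw [mem_closedBall_zero_iff] at hx
        have hR : 0 ≤ s - R := sub_nonneg.2 hRs
        have hax : s - R ≤ ‖a - x‖ := by linarith [norm_sub_norm_le a x]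
        have hbx : s - R ≤ ‖b - x‖ := by linarith [norm_sub_norm_le b x]
        exact le_min (by gcongr) (by gcongr)
    _ ≤ pairCost μ (a, b) := setIntegral_le_integral hmin (ae_of_all _ fun x => by positivity)

end FiniteMeasure

section InnerProduct

variable [InnerProductSpace ℝ E] [IsProbabilityMeasure μ]

lemma integral_norm_integral_sub_sq_le [CompleteSpace E] (hX : MemLp id 2 μ) (a : E) :
    ∫ x, ‖(∫ y, y ∂μ) - x‖ ^ 2 ∂μ ≤ ∫ x, ‖a - x‖ ^ 2 ∂μ := by
  set m := ∫ y, y ∂μ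
  have hid : Integrable (fun x : E => x) μ := hX.integrable one_le_two
  have hmx : Integrable (fun x => m - x) μ := (integrable_const m).sub hid
  have hcross : ∫ x, ⟪a - m, m - x⟫ ∂μ = 0 := by
    rw [integral_inner hmx, integral_sub (integrable_const m) hid,
      integral_const, probReal_univ, one_smul, sub_self, inner_zero_right]
  have hsplit : ∀ x, ‖a - x‖ ^ 2 = ‖a - m‖ ^ 2 + 2 * ⟪a - m, m - x⟫ + ‖m - x‖ ^ 2 := fun x => by
    rw [← norm_add_sq_real, sub_add_sub_cancel]
  have hint : Integrable (fun x => ‖a - m‖ ^ 2 + 2 * ⟪a - m, m - x⟫) μ :=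
    (integrable_const _).add ((hmx.const_inner (a - m)).const_mul 2)
  rw [integral_congr_ae (ae_of_all μ hsplit), integral_add hint (integrable_norm_sub_sq hX m),
    integral_add (integrable_const _) ((hmx.const_inner (a - m)).const_mul 2),
    integral_const_mul, hcross]
  simp only [integral_const, probReal_univ, one_smul, mul_zero, add_zero]
  linarith [sq_nonneg ‖a - m‖]

lemma pairCost_add_sub (hX : MemLp id 2 μ) (m v : E) :
    pairCost μ (m + v, m - v) =
      ‖v‖ ^ 2 + ∫ x, ‖m - x‖ ^ 2 ∂μ - 2 * ∫ x, |⟪v, m - x⟫| ∂μ := by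
  have hinner : Integrable (fun x => |⟪v, m - x⟫|) μ :=
    ((((memLp_const m).sub hX).integrable one_le_two).const_inner v).abs
  have hsum : Integrable (fun x => ‖v‖ ^ 2 + ‖m - x‖ ^ 2) μ :=
    (integrable_const _).add (integrable_norm_sub_sq hX m)
  simp only [pairCost, min_norm_add_sub_sq]
  rw [integral_sub hsum (hinner.const_mul 2), integral_add (integrable_const _)
    (integrable_norm_sub_sq hX m), integral_const_mul]
  simp

lemma exists_lt_pairCost_of_lt_norm [CompleteSpace E] [OpensMeasurableSpace E]
    (hX : MemLp id 2 μ) {C : ℝ}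
    (hC : C < ∫ x, ‖(∫ y, y ∂μ) - x‖ ^ 2 ∂μ) :
    ∃ R, ∀ a b : E, ‖a‖ ≤ ‖b‖ → R < ‖b‖ → C < pairCost μ (a, b) := by
  obtain ⟨R₀, hR₀⟩ := exists_measure_closedBall_pos (ν := μ) (0 : E)
  set w := μ.real (closedBall 0 R₀)
  have hw : 0 < w := ENNReal.toReal_pos hR₀.ne' (measure_ne_top _ _)
  obtain ⟨s, hR₀s, hs⟩ : ∃ s, R₀ ≤ s ∧ C < w * (s - R₀) ^ 2 := by
    refine ⟨R₀ + (1 + |C| / w), le_add_of_nonneg_right (by positivity), ?_⟩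
    have ht : 1 ≤ 1 + |C| / w := le_add_of_nonneg_right (by positivity)
    calc C < w + |C| := by linarith [le_abs_self C]
      _ = w * (1 + |C| / w) := by field_simp
      _ ≤ w * (1 + |C| / w) ^ 2 := by gcongr; nlinarith
      _ = w * (R₀ + (1 + |C| / w) - R₀) ^ 2 := by ring
  obtain ⟨R₁, hR₁⟩ := ((tendsto_setIntegral_compl_closedBall
    (integrable_const_add_norm_sq hX s) 0).eventually (gt_mem_nhds (sub_pos.2 hC))).exists
  refine ⟨s + 2 * R₁, fun a b hab hb => ?_⟩
  rcases le_or_gt ‖a‖ s with has | has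
  · calc C < ∫ x, ‖(∫ y, y ∂μ) - x‖ ^ 2 ∂μ - ∫ x in (closedBall 0 R₁)ᶜ, (s + ‖x‖) ^ 2 ∂μ := by
          linarith
      _ ≤ ∫ x, ‖a - x‖ ^ 2 ∂μ - ∫ x in (closedBall 0 R₁)ᶜ, (s + ‖x‖) ^ 2 ∂μ := by
          linarith [integral_norm_integral_sub_sq_le hX a]
      _ ≤ pairCost μ (a, b) := integral_norm_sub_sq_sub_tail_le_pairCost hX has hb
  · exact hs.trans_le
      (measureReal_closedBall_mul_sq_le_pairCost hX hR₀s has.le (has.le.trans hab))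

lemma isBounded_setOf_pairCost_le [CompleteSpace E] [OpensMeasurableSpace E]
    (hX : MemLp id 2 μ) {C : ℝ}
    (hC : C < ∫ x, ‖(∫ y, y ∂μ) - x‖ ^ 2 ∂μ) :
    Bornology.IsBounded {p : E × E | pairCost μ p ≤ C} := by
  obtain ⟨R, hR⟩ := exists_lt_pairCost_of_lt_norm hX hC
  refine isBounded_iff_forall_norm_le.2 ⟨R, fun p hp => ?_⟩
  by_contra! hpR
  rw [Set.mem_ofPred_eq] at hp
  rw [Prod.norm_def] at hpR
  rcases le_total ‖p.1‖ ‖p.2‖ with h | h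
  · exact (hR p.1 p.2 h (by rwa [max_eq_right h] at hpR)).not_ge hp
  · exact (hR p.2 p.1 h (by rwa [max_eq_left h] at hpR)).not_ge
      (by rwa [← pairCost_swap] at hp)

section FiniteDimensional

variable [FiniteDimensional ℝ E] [BorelSpace E] (ν : Measure E) [ν.IsAddHaarMeasure]

lemma integral_abs_inner_sub_pos (hac : μ ≪ ν) (hX : MemLp id 2 μ) {v : E} (hv : v ≠ 0)
    (m : E) : 0 < ∫ x, |⟪v, m - x⟫| ∂μ := by
  have hplane : μ {x | ⟪v, m - x⟫ = 0} = 0 := by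
    refine hac ?_
    have hset : {x | ⟪v, m - x⟫ = 0} =
        (AffineSubspace.mk' m (LinearMap.ker (innerₛₗ ℝ v)) : Set E) := by
      ext x
      rw [Set.mem_ofPred_eq, SetLike.mem_coe, AffineSubspace.mem_mk', LinearMap.mem_ker,
        innerₛₗ_apply_apply, vsub_eq_sub, ← neg_sub m x, inner_neg_right, neg_eq_zero]
    rw [hset]
    refine Measure.addHaar_affineSubspace ν _ fun htop => hv ?_
    have hvdir : v ∈ (AffineSubspace.mk' m (LinearMap.ker (innerₛₗ ℝ v))).direction := by
      rw [htop, AffineSubspace.direction_top]; trivial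
    simpa [AffineSubspace.direction_mk'] using hvdir
  have hinner : Integrable (fun x => |⟪v, m - x⟫|) μ :=
    ((((memLp_const m).sub hX).integrable one_le_two).const_inner v).abs
  refine (integral_nonneg fun x => abs_nonneg _).lt_of_ne' fun h0 => ?_
  have hzero := (integral_eq_zero_iff_of_nonneg (fun x => abs_nonneg _) hinner).1 h0
  obtain ⟨x, hx0, hxne⟩ := (hzero.and (measure_eq_zero_iff_ae_notMem.1 hplane)).exists
  exact hxne (abs_eq_zero.1 hx0)

lemma exists_pairCost_lt [Nontrivial E] (hac : μ ≪ ν) (hX : MemLp id 2 μ) (m : E) :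
    ∃ p, pairCost μ p < ∫ x, ‖m - x‖ ^ 2 ∂μ := by
  obtain ⟨e, he⟩ := exists_norm_eq E zero_le_one
  set c := ∫ x, |⟪e, m - x⟫| ∂μ
  have hc : 0 < c := integral_abs_inner_sub_pos ν hac hX (norm_ne_zero_iff.1 (by simp [he])) m
  have hgain : ∫ x, |⟪c • e, m - x⟫| ∂μ = c * c := by
    simp only [inner_smul_left, abs_mul, integral_const_mul]
    simp [abs_of_pos hc, c]
  refine ⟨(m + c • e, m - c • e), ?_⟩
  rw [pairCost_add_sub hX, hgain, norm_smul, he, Real.norm_of_nonneg hc.le]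
  nlinarith

theorem exists_forall_pairCost_le_and_lt [Nontrivial E] (hac : μ ≪ ν) (hX : MemLp id 2 μ) :
    ∃ p : E × E, (∀ q, pairCost μ p ≤ pairCost μ q) ∧
      pairCost μ p < ∫ x, ‖(∫ y, y ∂μ) - x‖ ^ 2 ∂μ := by
  obtain ⟨p₀, hp₀⟩ := exists_pairCost_lt ν hac hX (∫ y, y ∂μ)
  obtain ⟨p, hp⟩ := (continuous_pairCost hX).exists_forall_le_of_isBounded p₀
    (isBounded_setOf_pairCost_le hX hp₀)
  exact ⟨p, hp, (hp p₀).trans_lt hp₀⟩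

end FiniteDimensional

end InnerProduct

/-- **Existence of a globally optimal heterarchical pair of estimators.**
There exists a pair `(a*, b*)` globally minimizing the two-estimator cost
`J(a,b) = ∫ min(‖a-x‖², ‖b-x‖²) dμ`, and the minimal cost is strictly smaller
than the MMSE `J_MS = ∫ ‖x - m‖² dμ` where `m = ∫ x dμ`. -/
theorem heterarchical_global_min_exists
    (n : ℕ) (hn : 1 ≤ n)
    (μ : Measure (EuclideanSpace ℝ (Fin n))) [IsProbabilityMeasure μ]
    (hac : μ ≪ volume)
    (hmom : Integrable (fun x => ‖x‖ ^ 2) μ) :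
    ∃ astar bstar : EuclideanSpace ℝ (Fin n),
      (∀ a b : EuclideanSpace ℝ (Fin n),
          ∫ x, min (‖astar - x‖ ^ 2) (‖bstar - x‖ ^ 2) ∂μ ≤
            ∫ x, min (‖a - x‖ ^ 2) (‖b - x‖ ^ 2) ∂μ) ∧
      ∫ x, min (‖astar - x‖ ^ 2) (‖bstar - x‖ ^ 2) ∂μ <
        ∫ x, ‖x - (∫ y, y ∂μ)‖ ^ 2 ∂μ := by
  have : Nonempty (Fin n) := ⟨⟨0, hn⟩⟩
  have hX : MemLp id 2 μ := (memLp_two_iff_integrable_sq_norm aestronglyMeasurable_id).2 hmom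
  obtain ⟨p, hmin, hlt⟩ := exists_forall_pairCost_le_and_lt volume hac hX
  refine ⟨p.1, p.2, fun a b => hmin (a, b), hlt.trans_eq ?_⟩
  exact integral_congr_ae (ae_of_all _ fun x => congrArg (· ^ 2) (norm_sub_rev _ x))
end

section
/- There exists b* ∈ ℝⁿ minimizing the constrained (hierarchical) cost, i.e. J(m, b*) ≤ J(m, b) for all b ∈ ℝⁿ, with J(m, b*) < J_MS; moreover every such minimizer b* satisfies b* ≠ m, μ(V₂(m, b*)) > 0, and b* · μ(V₂(m, b*)) = ∫_{V₂(m, b*)} x dμ(x). -/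
/-!
The cost `b ↦ J(m, b)` is continuous and tends to `∫ ‖m - x‖² dμ` as `‖b‖ → ∞`, since a far
away point captures nothing. Some `b` captures a set of positive measure, for otherwise `μ`
would be concentrated at `m`, which `μ ≪ volume` forbids; such a `b` has cost strictly below
`J_MS`. Hence a global minimizer `b*` exists and beats `J_MS`, which forces its cell `V` to have
positive measure. Finally, by the parallel axis theorem, moving `b*` to the centroid `c` of `V`
lowers the cost by `μ(V) ‖b* - c‖²`, so minimality makes `b*` that centroid.
-/

open MeasureTheory Filter Topology Set

namespace TwoPointQuantizer

variable {E : Type*} [NormedAddCommGroup E]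

/-- The paper's `V₂(a, b)`. -/
def voronoiCell (a b : E) : Set E := {x | ‖b - x‖ < ‖a - x‖}

@[simp]
lemma voronoiCell_self (a : E) : voronoiCell a a = ∅ := by
  simp [voronoiCell]

lemma isOpen_voronoiCell (a b : E) : IsOpen (voronoiCell a b) :=
  isOpen_lt (continuous_const.sub continuous_id).norm (continuous_const.sub continuous_id).norm

variable [MeasurableSpace E]

/-- The paper's `J(a, b)`. -/
noncomputable def twoPointCost (μ : Measure E) (a b : E) : ℝ :=
  ∫ x, min (‖a - x‖ ^ 2) (‖b - x‖ ^ 2) ∂μ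

lemma measurableSet_voronoiCell [OpensMeasurableSpace E] (a b : E) :
    MeasurableSet (voronoiCell a b) :=
  (isOpen_voronoiCell a b).measurableSet

lemma exists_measure_voronoiCell_pos [SecondCountableTopology E] {μ : Measure E} {a : E}
    (h : μ {a}ᶜ ≠ 0) : ∃ b, 0 < μ (voronoiCell a b) := by
  by_contra! hnull
  refine h (measure_null_of_locally_null _ fun x hx => ?_)
  have hx : x ∈ voronoiCell a x := by
    simpa [voronoiCell, sub_eq_zero, eq_comm] using hx
  exact ⟨voronoiCell a x, mem_nhdsWithin_of_mem_nhds ((isOpen_voronoiCell a x).mem_nhds hx),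
    nonpos_iff_eq_zero.1 (hnull x)⟩

variable [OpensMeasurableSpace E] [SecondCountableTopology E] {μ : Measure E}

lemma memLp_two_id (hmom : Integrable (fun x => ‖x‖ ^ 2) μ) : MemLp id 2 μ :=
  (memLp_two_iff_integrable_sq_norm aestronglyMeasurable_id).2 hmom

variable [IsFiniteMeasure μ]

lemma integrable_norm_sub_sq (hmom : Integrable (fun x => ‖x‖ ^ 2) μ) (a : E) :
    Integrable (fun x => ‖a - x‖ ^ 2) μ :=
  have h : MemLp (fun x => a - x) 2 μ := (memLp_const a).sub (memLp_two_id hmom)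
  (memLp_two_iff_integrable_sq_norm h.1).1 h

lemma integrable_min_norm_sub_sq (hmom : Integrable (fun x => ‖x‖ ^ 2) μ) (a b : E) :
    Integrable (fun x => min (‖a - x‖ ^ 2) (‖b - x‖ ^ 2)) μ := by
  refine (integrable_norm_sub_sq hmom a).mono'
    ((integrable_norm_sub_sq hmom a).1.inf (integrable_norm_sub_sq hmom b).1) ?_
  filter_upwards with x
  rw [Real.norm_of_nonneg (by positivity)]
  exact min_le_left _ _

lemma twoPointCost_le_setIntegral_add (hmom : Integrable (fun x => ‖x‖ ^ 2) μ) (a b : E)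
    {V : Set E} (hV : MeasurableSet V) :
    twoPointCost μ a b ≤ ∫ x in V, ‖b - x‖ ^ 2 ∂μ + ∫ x in Vᶜ, ‖a - x‖ ^ 2 ∂μ := by
  rw [twoPointCost, ← integral_add_compl hV (integrable_min_norm_sub_sq hmom a b)]
  gcongr ?_ + ?_
  · exact setIntegral_mono_on (integrable_min_norm_sub_sq hmom a b).integrableOn
      (integrable_norm_sub_sq hmom b).integrableOn hV fun x _ => min_le_right _ _
  · exact setIntegral_mono_on (integrable_min_norm_sub_sq hmom a b).integrableOn
      (integrable_norm_sub_sq hmom a).integrableOn hV.compl fun x _ => min_le_left _ _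

lemma twoPointCost_eq_setIntegral_add (hmom : Integrable (fun x => ‖x‖ ^ 2) μ) (a b : E) :
    twoPointCost μ a b = ∫ x in voronoiCell a b, ‖b - x‖ ^ 2 ∂μ
      + ∫ x in (voronoiCell a b)ᶜ, ‖a - x‖ ^ 2 ∂μ := by
  have hV := measurableSet_voronoiCell a b
  rw [twoPointCost, ← integral_add_compl hV (integrable_min_norm_sub_sq hmom a b)]
  congr 1
  · refine setIntegral_congr_fun hV fun x hx => min_eq_right ?_
    exact pow_le_pow_left₀ (norm_nonneg _) (le_of_lt hx) 2
  · refine setIntegral_congr_fun hV.compl fun x hx => min_eq_left ?_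
    exact pow_le_pow_left₀ (norm_nonneg _) (not_lt.1 hx) 2

lemma twoPointCost_lt_iff (hmom : Integrable (fun x => ‖x‖ ^ 2) μ) (a b : E) :
    twoPointCost μ a b < ∫ x, ‖a - x‖ ^ 2 ∂μ ↔ 0 < μ (voronoiCell a b) := by
  have hdiff : Integrable (fun x => ‖a - x‖ ^ 2 - min (‖a - x‖ ^ 2) (‖b - x‖ ^ 2)) μ :=
    (integrable_norm_sub_sq hmom a).sub (integrable_min_norm_sub_sq hmom a b)
  have hsupp : Function.support (fun x => ‖a - x‖ ^ 2 - min (‖a - x‖ ^ 2) (‖b - x‖ ^ 2))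
      = voronoiCell a b := by
    ext x
    simp [voronoiCell, sub_eq_zero, pow_lt_pow_iff_left₀, norm_nonneg]
  rw [← sub_pos, twoPointCost, ← integral_sub (integrable_norm_sub_sq hmom a)
    (integrable_min_norm_sub_sq hmom a b), integral_pos_iff_support_of_nonneg_ae _ hdiff, hsupp]
  exact Eventually.of_forall fun x => sub_nonneg.2 (min_le_left _ _)

lemma continuous_twoPointCost (hmom : Integrable (fun x => ‖x‖ ^ 2) μ) (a : E) :
    Continuous (twoPointCost μ a) := by
  refine continuous_of_dominated (fun b => (integrable_min_norm_sub_sq hmom a b).1)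
    (fun b => Eventually.of_forall fun x => ?_) (integrable_norm_sub_sq hmom a)
    (Eventually.of_forall fun x => by fun_prop)
  rw [Real.norm_of_nonneg (by positivity)]
  exact min_le_left _ _

lemma tendsto_twoPointCost_cobounded (hmom : Integrable (fun x => ‖x‖ ^ 2) μ) (a : E) :
    Tendsto (twoPointCost μ a) (Bornology.cobounded E) (𝓝 (∫ x, ‖a - x‖ ^ 2 ∂μ)) := by
  rw [← comap_norm_atTop]
  refine tendsto_integral_filter_of_dominated_convergence _
    (Eventually.of_forall fun b => (integrable_min_norm_sub_sq hmom a b).1)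
    (Eventually.of_forall fun b => Eventually.of_forall fun x => ?_)
    (integrable_norm_sub_sq hmom a) (Eventually.of_forall fun x => ?_)
  · rw [Real.norm_of_nonneg (by positivity)]
    exact min_le_left _ _
  · refine tendsto_const_nhds.congr' ?_
    filter_upwards [tendsto_comap.eventually (eventually_ge_atTop (‖a - x‖ + ‖x‖))] with b hb
    refine (min_eq_left (pow_le_pow_left₀ (norm_nonneg _) ?_ 2)).symm
    linarith [norm_sub_norm_le b x]

lemma exists_forall_twoPointCost_le [ProperSpace E] (hmom : Integrable (fun x => ‖x‖ ^ 2) μ)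
    {a b₀ : E} (hb₀ : 0 < μ (voronoiCell a b₀)) :
    ∃ b, ∀ b', twoPointCost μ a b ≤ twoPointCost μ a b' := by
  have hlt := (twoPointCost_lt_iff hmom a b₀).2 hb₀
  refine (continuous_twoPointCost hmom a).exists_forall_le' b₀ ?_
  rw [← Metric.cobounded_eq_cocompact]
  exact ((tendsto_twoPointCost_cobounded hmom a).eventually (lt_mem_nhds hlt)).mono
    fun _ => le_of_lt

variable [InnerProductSpace ℝ E] [CompleteSpace E]

open scoped RealInnerProductSpace in
lemma integral_norm_sub_sq_eq_of_centroid {ν : Measure E} [IsFiniteMeasure ν]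
    (hmom : Integrable (fun x => ‖x‖ ^ 2) ν) {c : E} (hc : ν.real univ • c = ∫ x, x ∂ν) (b : E) :
    ∫ x, ‖b - x‖ ^ 2 ∂ν = ∫ x, ‖c - x‖ ^ 2 ∂ν + ν.real univ * ‖b - c‖ ^ 2 := by
  have hid : Integrable (fun x => x) ν := (memLp_two_id hmom).integrable one_le_two
  have hcx : Integrable (fun x => c - x) ν := (integrable_const c).sub hid
  have hmean : ∫ x, (c - x) ∂ν = 0 := by
    rw [integral_sub (integrable_const c) hid, integral_const, hc, sub_self]
  have hexpand : (fun x => ‖b - x‖ ^ 2) =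
      fun x => ‖c - x‖ ^ 2 + (2 * ⟪b - c, c - x⟫ + ‖b - c‖ ^ 2) := by
    ext x
    rw [← sub_add_sub_cancel b c x, norm_add_sq_real]
    ring
  have hcross : Integrable (fun x => 2 * ⟪b - c, c - x⟫) ν :=
    (hcx.const_inner (b - c)).const_mul 2
  have hrest : Integrable (fun x => 2 * ⟪b - c, c - x⟫ + ‖b - c‖ ^ 2) ν :=
    hcross.add (integrable_const _)
  rw [hexpand, integral_add (integrable_norm_sub_sq hmom c) hrest,
    integral_add hcross (integrable_const _),
    integral_const_mul, integral_inner hcx, hmean, inner_zero_right, integral_const, smul_eq_mul]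
  ring

lemma measureReal_voronoiCell_smul_eq_setIntegral (hmom : Integrable (fun x => ‖x‖ ^ 2) μ)
    {a b : E} (hmin : ∀ b', twoPointCost μ a b ≤ twoPointCost μ a b') :
    μ.real (voronoiCell a b) • b = ∫ x in voronoiCell a b, x ∂μ := by
  set V := voronoiCell a b
  rcases eq_or_ne (μ.real V) 0 with hV | hV
  · have hV0 : μ V = 0 := (measureReal_eq_zero_iff (measure_ne_top μ V)).1 hV
    rw [hV, zero_smul, Measure.restrict_eq_zero.2 hV0, integral_zero_measure]
  set c := (μ.real V)⁻¹ • ∫ x in V, x ∂μ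
  have hc : (μ.restrict V).real univ • c = ∫ x in V, x ∂μ := by
    rw [measureReal_restrict_apply_univ]
    exact smul_inv_smul₀ hV _
  have hcentroid := integral_norm_sub_sq_eq_of_centroid hmom.restrict hc b
  rw [measureReal_restrict_apply_univ] at hcentroid
  have hgain : μ.real V * ‖b - c‖ ^ 2 ≤ 0 := by
    have := (hmin c).trans
      (twoPointCost_le_setIntegral_add hmom a c (measurableSet_voronoiCell a b))
    rw [twoPointCost_eq_setIntegral_add hmom a b, hcentroid] at this
    linarith
  have hbc : b = c := by
    have hpos : 0 < μ.real V := lt_of_le_of_ne measureReal_nonneg hV.symm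
    have : ‖b - c‖ ^ 2 ≤ 0 := nonpos_of_mul_nonpos_right hgain hpos
    simpa [sub_eq_zero] using this
  rw [hbc, ← measureReal_restrict_apply_univ, hc]

end TwoPointQuantizer

open TwoPointQuantizer

theorem hierarchical_global_min_exists_and_centroidal_general
    (n : ℕ) (hn : 1 ≤ n)
    (μ : Measure (EuclideanSpace ℝ (Fin n))) [IsProbabilityMeasure μ]
    (hac : μ ≪ volume)
    (hmom : Integrable (fun x => ‖x‖ ^ 2) μ)
    (m : EuclideanSpace ℝ (Fin n)) :
    (∃ bstar : EuclideanSpace ℝ (Fin n),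
      (∀ b : EuclideanSpace ℝ (Fin n),
          ∫ x, min (‖m - x‖ ^ 2) (‖bstar - x‖ ^ 2) ∂μ ≤
            ∫ x, min (‖m - x‖ ^ 2) (‖b - x‖ ^ 2) ∂μ) ∧
      ∫ x, min (‖m - x‖ ^ 2) (‖bstar - x‖ ^ 2) ∂μ < ∫ x, ‖x - m‖ ^ 2 ∂μ) ∧
    (∀ bstar : EuclideanSpace ℝ (Fin n),
      (∀ b : EuclideanSpace ℝ (Fin n),
          ∫ x, min (‖m - x‖ ^ 2) (‖bstar - x‖ ^ 2) ∂μ ≤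
            ∫ x, min (‖m - x‖ ^ 2) (‖b - x‖ ^ 2) ∂μ) →
        bstar ≠ m ∧
        0 < μ {x | ‖bstar - x‖ < ‖m - x‖} ∧
        (μ {x | ‖bstar - x‖ < ‖m - x‖}).toReal • bstar =
          ∫ x in {x | ‖bstar - x‖ < ‖m - x‖}, x ∂μ) := by
  have : Nonempty (Fin n) := ⟨⟨0, hn⟩⟩
  have hcompl : μ {m}ᶜ ≠ 0 := by
    rw [(prob_compl_eq_one_iff (measurableSet_singleton m)).2 (hac (measure_singleton m))]
    exact one_ne_zero
  obtain ⟨b₀, hb₀⟩ := exists_measure_voronoiCell_pos hcompl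
  have hlt_of_min (b : EuclideanSpace ℝ (Fin n))
      (hmin : ∀ b', twoPointCost μ m b ≤ twoPointCost μ m b') :
      twoPointCost μ m b < ∫ x, ‖m - x‖ ^ 2 ∂μ :=
    (hmin b₀).trans_lt ((twoPointCost_lt_iff hmom m b₀).2 hb₀)
  obtain ⟨bstar, hmin⟩ := exists_forall_twoPointCost_le hmom hb₀
  refine ⟨⟨bstar, hmin, ?_⟩, fun b hmin => ?_⟩
  · simp_rw [norm_sub_rev _ m]
    exact hlt_of_min bstar hmin
  · have hV := (twoPointCost_lt_iff hmom m b).1 (hlt_of_min b hmin)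
    refine ⟨?_, hV, measureReal_voronoiCell_smul_eq_setIntegral hmom hmin⟩
    rintro rfl
    simp at hV

/-- **Existence and characterization of the optimal hierarchical estimator.**
With the first estimator fixed at the mean `m = ∫ x dμ`, there exists `b*`
minimizing `b ↦ J(m, b)`, with minimal cost strictly below the MMSE `J_MS`;
moreover every such minimizer satisfies `b* ≠ m`, its Voronoi region has
positive measure, and `b*` is the centroid of its Voronoi region. -/
theorem hierarchical_global_min_exists_and_centroidal
    (n : ℕ) (hn : 1 ≤ n)
    (μ : Measure (EuclideanSpace ℝ (Fin n))) [IsProbabilityMeasure μ]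
    (hac : μ ≪ volume)
    (hmom : Integrable (fun x => ‖x‖ ^ 2) μ)
    (m : EuclideanSpace ℝ (Fin n)) (hm : m = ∫ x, x ∂μ) :
    (∃ bstar : EuclideanSpace ℝ (Fin n),
      (∀ b : EuclideanSpace ℝ (Fin n),
          ∫ x, min (‖m - x‖ ^ 2) (‖bstar - x‖ ^ 2) ∂μ ≤
            ∫ x, min (‖m - x‖ ^ 2) (‖b - x‖ ^ 2) ∂μ) ∧
      ∫ x, min (‖m - x‖ ^ 2) (‖bstar - x‖ ^ 2) ∂μ < ∫ x, ‖x - m‖ ^ 2 ∂μ) ∧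
    (∀ bstar : EuclideanSpace ℝ (Fin n),
      (∀ b : EuclideanSpace ℝ (Fin n),
          ∫ x, min (‖m - x‖ ^ 2) (‖bstar - x‖ ^ 2) ∂μ ≤
            ∫ x, min (‖m - x‖ ^ 2) (‖b - x‖ ^ 2) ∂μ) →
        bstar ≠ m ∧
        0 < μ {x | ‖bstar - x‖ < ‖m - x‖} ∧
        (μ {x | ‖bstar - x‖ < ‖m - x‖}).toReal • bstar =
          ∫ x in {x | ‖bstar - x‖ < ‖m - x‖}, x ∂μ) :=
  hierarchical_global_min_exists_and_centroidal_general n hn μ hac hmom m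
end

section
/- For every ε > 0 there exists L(ε) > 0 such that for all a, b ∈ ℝⁿ with ‖b‖ − ‖a‖ > L(ε), the two-estimator cost satisfies J(a, b) > J_MS − ε. -/
/-!
If `‖b‖ - ‖a‖ > 2R`, every point of the ball `closedBall 0 R` is closer to `a` than to `b`, so
`J(a, b) ≥ ∫_{B_R} ‖a - x‖² dμ`. Completing the square, this is at least the scatter
`∫_{B_R} ‖x‖² dμ - ‖∫_{B_R} x dμ‖² / μ(B_R)` of `μ` on the ball, whatever `a` is, and these
scatters tend to the scatter of `μ`, which is `J_MS`, as `R → ∞`.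
-/

open MeasureTheory Filter Topology Metric Set
open scoped RealInnerProductSpace

lemma norm_sub_le_norm_sub_of_norm_le {E : Type*} [SeminormedAddCommGroup E] {a b x : E} {R : ℝ}
    (hx : ‖x‖ ≤ R) (hab : 2 * R ≤ ‖b‖ - ‖a‖) : ‖a - x‖ ≤ ‖b - x‖ := by
  have := norm_sub_le a x
  have := norm_sub_norm_le b x
  linarith

lemma MeasureTheory.MemLp.integrable_norm_const_sub_sq {E : Type*} [NormedAddCommGroup E]
    [MeasurableSpace E] {μ : Measure E} [IsFiniteMeasure μ] (h : MemLp (fun x : E => x) 2 μ)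
    (a : E) : Integrable (fun x => ‖a - x‖ ^ 2) μ :=
  ((memLp_const a).sub h).integrable_norm_pow two_ne_zero

section Scatter

variable {E : Type*} [NormedAddCommGroup E] [NormedSpace ℝ E] [MeasurableSpace E] {μ : Measure E}

noncomputable def scatter (μ : Measure E) : ℝ :=
  ∫ x, ‖x‖ ^ 2 ∂μ - ‖∫ x, x ∂μ‖ ^ 2 / μ.real univ

lemma tendsto_scatter_restrict_closedBall [OpensMeasurableSpace E] [IsFiniteMeasure μ] [NeZero μ]
    (h : MemLp (fun x : E => x) 2 μ) :
    Tendsto (fun R : ℝ => scatter (μ.restrict (closedBall 0 R))) atTop (𝓝 (scatter μ)) := by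
  have hcov : AECover μ atTop (fun R : ℝ => closedBall (0 : E) R) := aecover_closedBall tendsto_id
  have hsq := hcov.integral_tendsto_of_countably_generated (h.integrable_norm_pow two_ne_zero)
  have hid := hcov.integral_tendsto_of_countably_generated (h.integrable one_le_two)
  have hmass := hcov.integral_tendsto_of_countably_generated (integrable_const (1 : ℝ))
  simp only [integral_const, smul_eq_mul, mul_one, measureReal_restrict_apply_univ] at hmass
  simp only [scatter, measureReal_restrict_apply_univ]
  exact hsq.sub ((hid.norm.pow 2).div hmass measureReal_univ_ne_zero)

end Scatter

section InnerProductSpace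

variable {E : Type*} [NormedAddCommGroup E] [InnerProductSpace ℝ E] [CompleteSpace E]
  [MeasurableSpace E] {μ : Measure E} [IsFiniteMeasure μ]

lemma integral_norm_sub_sq (h : MemLp (fun x : E => x) 2 μ) (a : E) :
    ∫ x, ‖a - x‖ ^ 2 ∂μ = μ.real univ * ‖a‖ ^ 2 - 2 * ⟪a, ∫ x, x ∂μ⟫ + ∫ x, ‖x‖ ^ 2 ∂μ := by
  have hinner : Integrable (fun x => 2 * ⟪a, x⟫) μ :=
    ((h.integrable one_le_two).const_inner a).const_mul 2
  simp_rw [norm_sub_sq_real]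
  rw [integral_add (f := fun x => ‖a‖ ^ 2 - 2 * ⟪a, x⟫) ((integrable_const _).sub hinner)
      (h.integrable_norm_pow two_ne_zero),
    integral_sub (integrable_const _) hinner, integral_const, integral_const_mul,
    integral_inner (h.integrable one_le_two), smul_eq_mul]

lemma scatter_le_integral_norm_sub_sq (h : MemLp (fun x : E => x) 2 μ) (a : E) :
    scatter μ ≤ ∫ x, ‖a - x‖ ^ 2 ∂μ := by
  rcases eq_zero_or_neZero μ with rfl | _
  · simp [scatter]
  rw [integral_norm_sub_sq h, scatter]
  set p := μ.real univ
  set s := ∫ x, x ∂μ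
  have hp : 0 < p := measureReal_univ_pos
  have hexpand : ‖s - p • a‖ ^ 2 / p = ‖s‖ ^ 2 / p - 2 * ⟪a, s⟫ + p * ‖a‖ ^ 2 := by
    rw [norm_sub_sq_real, norm_smul, inner_smul_right, Real.norm_of_nonneg hp.le,
      real_inner_comm]
    field_simp
  have : 0 ≤ ‖s - p • a‖ ^ 2 / p := by positivity
  linarith

lemma scatter_eq_integral_norm_sub_integral_sq [IsProbabilityMeasure μ]
    (h : MemLp (fun x : E => x) 2 μ) :
    scatter μ = ∫ x, ‖x - ∫ y, y ∂μ‖ ^ 2 ∂μ := by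
  simp_rw [norm_sub_rev _ (∫ y, y ∂μ)]
  rw [integral_norm_sub_sq h, scatter, real_inner_self_eq_norm_sq, probReal_univ]
  ring

end InnerProductSpace

theorem cost_large_when_norm_difference_large_general
    (n : ℕ)
    (μ : Measure (EuclideanSpace ℝ (Fin n))) [IsProbabilityMeasure μ]
    (hmom : Integrable (fun x => ‖x‖ ^ 2) μ)
    (ε : ℝ) (hε : 0 < ε) :
    ∃ L : ℝ, 0 < L ∧
      ∀ a b : EuclideanSpace ℝ (Fin n), L < ‖b‖ - ‖a‖ →
        (∫ x, ‖x - (∫ y, y ∂μ)‖ ^ 2 ∂μ) - ε <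
          ∫ x, min (‖a - x‖ ^ 2) (‖b - x‖ ^ 2) ∂μ := by
  have h : MemLp (fun x => x) 2 μ :=
    (memLp_two_iff_integrable_sq_norm aestronglyMeasurable_id).2 hmom
  obtain ⟨R, hR, hRpos⟩ := (((tendsto_scatter_restrict_closedBall h).eventually
    (eventually_gt_nhds (sub_lt_self _ hε))).and (eventually_gt_atTop 0)).exists
  rw [scatter_eq_integral_norm_sub_integral_sq h] at hR
  refine ⟨2 * R, by positivity, fun a b hab => ?_⟩
  have hmin : Integrable (fun x => min (‖a - x‖ ^ 2) (‖b - x‖ ^ 2)) μ :=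
    (h.integrable_norm_const_sub_sq a).inf (h.integrable_norm_const_sub_sq b)
  calc (∫ x, ‖x - (∫ y, y ∂μ)‖ ^ 2 ∂μ) - ε
      < scatter (μ.restrict (closedBall 0 R)) := hR
    _ ≤ ∫ x in closedBall 0 R, ‖a - x‖ ^ 2 ∂μ :=
        scatter_le_integral_norm_sub_sq (h.restrict _) a
    _ = ∫ x in closedBall 0 R, min (‖a - x‖ ^ 2) (‖b - x‖ ^ 2) ∂μ := by
      refine setIntegral_congr_fun measurableSet_closedBall fun x hx => (min_eq_left ?_).symm
      exact pow_le_pow_left₀ (norm_nonneg _) (norm_sub_le_norm_sub_of_norm_le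
        (mem_closedBall_zero_iff.1 hx) hab.le) 2
    _ ≤ ∫ x, min (‖a - x‖ ^ 2) (‖b - x‖ ^ 2) ∂μ :=
      setIntegral_le_integral hmin (ae_of_all _ fun x => by positivity)

/-- For every `ε > 0` there exists `L(ε) > 0` such that whenever
`‖b‖ − ‖a‖ > L(ε)`, the two-estimator cost satisfies `J(a,b) > J_MS − ε`. -/
theorem cost_large_when_norm_difference_large
    (n : ℕ) (hn : 1 ≤ n)
    (μ : Measure (EuclideanSpace ℝ (Fin n))) [IsProbabilityMeasure μ]
    (hac : μ ≪ volume)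
    (hmom : Integrable (fun x => ‖x‖ ^ 2) μ)
    (ε : ℝ) (hε : 0 < ε) :
    ∃ L : ℝ, 0 < L ∧
      ∀ a b : EuclideanSpace ℝ (Fin n), L < ‖b‖ - ‖a‖ →
        (∫ x, ‖x - (∫ y, y ∂μ)‖ ^ 2 ∂μ) - ε <
          ∫ x, min (‖a - x‖ ^ 2) (‖b - x‖ ^ 2) ∂μ :=
  cost_large_when_norm_difference_large_general n μ hmom ε hε
end

section
/- There exists b₀ > 0 such that for every b ≥ b₀, the two-estimator cost J attains a minimum on the set S_b := {(a, c) ∈ ℝⁿ × ℝⁿ : max(‖a‖, ‖c‖) ≤ b}, i.e. there is (a*, c*) ∈ S_b with J(a*, c*) ≤ J(a, c) for all (a, c) ∈ S_b, and the minimal value satisfies J(a*, c*) < J_MS. -/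
/-!
Since `μ` has no atoms, it is not concentrated at the mean `m`, so a point `c` of a countable
dense set lies strictly closer than `m` to a set of points of positive measure; on that set
`min (‖m - x‖²) (‖c - x‖²) < ‖m - x‖²`, whence `J(m, c) < J_MS`. The cost is continuous by
dominated convergence (it is bounded by `2 (‖a‖² + ‖x‖²)`), so it attains its minimum on every
compact ball, and once the ball contains `(m, c)` this minimum is at most `J(m, c)`.
-/

open MeasureTheory Filter Topology

variable {E : Type*} [NormedAddCommGroup E]

lemma sq_norm_sub_le_two_mul (a x : E) : ‖a - x‖ ^ 2 ≤ 2 * (‖a‖ ^ 2 + ‖x‖ ^ 2) :=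
  (pow_le_pow_left₀ (norm_nonneg _) (norm_sub_le a x) 2).trans add_sq_le

variable [MeasurableSpace E] {μ : Measure E}

noncomputable def twoPointCost (μ : Measure E) (a c : E) : ℝ :=
  ∫ x, min (‖a - x‖ ^ 2) (‖c - x‖ ^ 2) ∂μ

section SecondMoment

variable [OpensMeasurableSpace E] [IsFiniteMeasure μ]

lemma integrable_sq_norm_sub (hmom : Integrable (fun x => ‖x‖ ^ 2) μ) (a : E) :
    Integrable (fun x => ‖a - x‖ ^ 2) μ :=
  (((integrable_const _).add hmom).const_mul 2).mono'
    (Continuous.aestronglyMeasurable (by fun_prop))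
    (Eventually.of_forall fun x => by
      simpa only [Real.norm_eq_abs, abs_pow, abs_norm, Pi.add_apply] using
        sq_norm_sub_le_two_mul a x)

lemma integrable_min_sq_norm_sub (hmom : Integrable (fun x => ‖x‖ ^ 2) μ) (a c : E) :
    Integrable (fun x => min (‖a - x‖ ^ 2) (‖c - x‖ ^ 2)) μ :=
  (integrable_sq_norm_sub hmom a).mono' (Continuous.aestronglyMeasurable (by fun_prop))
    (Eventually.of_forall fun x => by
      rw [Real.norm_eq_abs, abs_of_nonneg (by positivity)]
      exact min_le_left _ _)

lemma continuous_twoPointCost (hmom : Integrable (fun x => ‖x‖ ^ 2) μ) :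
    Continuous fun p : E × E => twoPointCost μ p.1 p.2 := by
  refine continuous_iff_continuousAt.2 fun p => continuousAt_of_dominated
    (bound := fun x => 2 * ((‖p.1‖ + 1) ^ 2 + ‖x‖ ^ 2))
    (Eventually.of_forall fun q => Continuous.aestronglyMeasurable (by fun_prop)) ?_
    (((integrable_const _).add hmom).const_mul 2)
    (Eventually.of_forall fun x => Continuous.continuousAt (by fun_prop))
  filter_upwards [continuous_fst.norm.continuousAt.eventually_lt continuousAt_const
    (lt_add_one ‖p.1‖)] with q hq
  refine Eventually.of_forall fun x => ?_
  rw [Real.norm_eq_abs, abs_of_nonneg (by positivity)]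
  calc min (‖q.1 - x‖ ^ 2) (‖q.2 - x‖ ^ 2) ≤ ‖q.1 - x‖ ^ 2 := min_le_left _ _
    _ ≤ 2 * (‖q.1‖ ^ 2 + ‖x‖ ^ 2) := sq_norm_sub_le_two_mul _ _
    _ ≤ 2 * ((‖p.1‖ + 1) ^ 2 + ‖x‖ ^ 2) := by gcongr

end SecondMoment

lemma exists_measure_closer_ne_zero [TopologicalSpace.SeparableSpace E] {m : E}
    (hm : μ {m}ᶜ ≠ 0) : ∃ c, μ {x | ‖c - x‖ < ‖m - x‖} ≠ 0 := by
  obtain ⟨D, hDc, hD⟩ := TopologicalSpace.exists_countable_dense E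
  have hcover : {m}ᶜ ⊆ ⋃ c ∈ D, {x | ‖c - x‖ < ‖m - x‖} := fun x hx => by
    obtain ⟨c, hcD, hc⟩ := hD.exists_dist_lt x (dist_pos.2 (Ne.symm hx))
    rw [dist_eq_norm, dist_eq_norm] at hc
    exact Set.mem_biUnion hcD (show ‖c - x‖ < ‖m - x‖ from norm_sub_rev x c ▸ hc)
  by_contra! h
  exact hm (measure_mono_null hcover ((measure_biUnion_null_iff hDc).2 fun c _ => h c))

lemma exists_twoPointCost_lt [OpensMeasurableSpace E] [TopologicalSpace.SeparableSpace E]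
    [IsFiniteMeasure μ] (hmom : Integrable (fun x => ‖x‖ ^ 2) μ) {m : E} (hm : μ {m}ᶜ ≠ 0) :
    ∃ c, twoPointCost μ m c < ∫ x, ‖x - m‖ ^ 2 ∂μ := by
  obtain ⟨c, hc⟩ := exists_measure_closer_ne_zero hm
  have hsq : Integrable (fun x => ‖x - m‖ ^ 2) μ := by
    simpa only [norm_sub_rev] using integrable_sq_norm_sub hmom m
  have hmin_int := integrable_min_sq_norm_sub hmom m c
  set g := fun x => ‖x - m‖ ^ 2 - min (‖m - x‖ ^ 2) (‖c - x‖ ^ 2)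
  have hg_nonneg : 0 ≤ g := fun x => sub_nonneg.2 (norm_sub_rev m x ▸ min_le_left _ _)
  have hg_pos : {x | ‖c - x‖ < ‖m - x‖} ⊆ Function.support g := fun x hx =>
    (sub_pos.2 <| (min_le_right _ _).trans_lt <| norm_sub_rev m x ▸
      pow_lt_pow_left₀ hx (norm_nonneg _) two_ne_zero).ne'
  have hg_int : 0 < ∫ x, g x ∂μ :=
    (integral_pos_iff_support_of_nonneg hg_nonneg (hsq.sub hmin_int)).2
      (pos_iff_ne_zero.2 fun h0 => hc (measure_mono_null hg_pos h0))
  rw [integral_sub hsq hmin_int] at hg_int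
  exact ⟨c, sub_pos.1 hg_int⟩

/-- There exists `b₀ > 0` such that for every `b ≥ b₀`, the two-estimator cost `J`
attains a minimum on the set `S_b = {(a,c) : max(‖a‖,‖c‖) ≤ b}`, and the minimal
value is strictly smaller than the MMSE `J_MS`. -/
theorem cost_attains_min_on_ball
    (n : ℕ) (hn : 1 ≤ n)
    (μ : Measure (EuclideanSpace ℝ (Fin n))) [IsProbabilityMeasure μ]
    (hac : μ ≪ volume)
    (hmom : Integrable (fun x => ‖x‖ ^ 2) μ) :
    ∃ b₀ : ℝ, 0 < b₀ ∧
      ∀ b : ℝ, b₀ ≤ b →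
        ∃ astar cstar : EuclideanSpace ℝ (Fin n),
          max ‖astar‖ ‖cstar‖ ≤ b ∧
          (∀ a c : EuclideanSpace ℝ (Fin n), max ‖a‖ ‖c‖ ≤ b →
            ∫ x, min (‖astar - x‖ ^ 2) (‖cstar - x‖ ^ 2) ∂μ ≤
              ∫ x, min (‖a - x‖ ^ 2) (‖c - x‖ ^ 2) ∂μ) ∧
          ∫ x, min (‖astar - x‖ ^ 2) (‖cstar - x‖ ^ 2) ∂μ <
            ∫ x, ‖x - (∫ y, y ∂μ)‖ ^ 2 ∂μ := by
  have : Nonempty (Fin n) := ⟨⟨0, hn⟩⟩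
  set m := ∫ y, y ∂μ
  have hm : μ {m}ᶜ ≠ 0 := by
    rw [(prob_compl_eq_one_iff (measurableSet_singleton m)).2 (hac (measure_singleton m))]
    exact one_ne_zero
  obtain ⟨c, hc⟩ := exists_twoPointCost_lt hmom hm
  refine ⟨max ‖m‖ ‖c‖ + 1, by positivity, fun b hb => ?_⟩
  have hball : ∀ p : EuclideanSpace ℝ (Fin n) × EuclideanSpace ℝ (Fin n),
      p ∈ Metric.closedBall 0 b ↔ max ‖p.1‖ ‖p.2‖ ≤ b := fun p => by
    rw [mem_closedBall_zero_iff, Prod.norm_def]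
  have hmc : (m, c) ∈ Metric.closedBall 0 b := (hball _).2 (by linarith)
  obtain ⟨p, hp, hmin⟩ := (isCompact_closedBall 0 b).exists_isMinOn ⟨_, hmc⟩
    (continuous_twoPointCost hmom).continuousOn
  rw [isMinOn_iff] at hmin
  exact ⟨p.1, p.2, (hball p).1 hp, fun a c' h => hmin (a, c') ((hball _).2 h),
    (hmin _ hmc).trans_lt hc⟩
end

section
/- For any a, b ∈ ℝⁿ with a ≠ b, if the Voronoi region of b has positive measure, μ(V₂(a, b)) > 0, then the two-estimator cost strictly improves on the single-estimator mean squared error of a: J(a, b) < ∫ ‖a − x‖² dμ(x). In particular, taking a = m, if μ(V₂(m, b)) > 0 then J(m, b) < J_MS. -/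
open MeasureTheory

section StrictMonotonicity

variable {α : Type*} [MeasurableSpace α] {μ : Measure α} {f g : α → ℝ}

theorem integral_lt_integral_of_ae_le_of_measure_setOf_lt_pos (hf : Integrable f μ)
    (hg : Integrable g μ) (hle : f ≤ᵐ[μ] g) (hlt : 0 < μ {x | f x < g x}) :
    ∫ x, f x ∂μ < ∫ x, g x ∂μ := by
  have hsupp : {x | f x < g x} ⊆ Function.support (g - f) := fun x hx =>
    sub_ne_zero.mpr (ne_of_gt hx)
  have hpos : 0 < ∫ x, (g - f) x ∂μ :=
    (integral_pos_iff_support_of_nonneg_ae (hle.mono fun x hx => sub_nonneg.mpr hx)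
      (hg.sub hf)).mpr (hlt.trans_le (measure_mono hsupp))
  rw [Pi.sub_def, integral_sub hg hf] at hpos
  linarith

theorem integral_min_lt_integral_left (hf : Integrable f μ) (hg : Integrable g μ)
    (hlt : 0 < μ {x | g x < f x}) :
    ∫ x, min (f x) (g x) ∂μ < ∫ x, f x ∂μ := by
  exact integral_lt_integral_of_ae_le_of_measure_setOf_lt_pos (hf.inf hg) hf
    (ae_of_all _ fun x => min_le_left _ _)
    (hlt.trans_le (measure_mono fun x (hx : g x < f x) => min_lt_of_right_lt hx))

end StrictMonotonicity

theorem integrable_norm_sub_sq_of_integrable_norm_sq {E : Type*} [NormedAddCommGroup E]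
    [MeasurableSpace E] [OpensMeasurableSpace E] [SecondCountableTopology E]
    {μ : Measure E} [IsFiniteMeasure μ] (hmom : Integrable (fun x => ‖x‖ ^ 2) μ) (a : E) :
    Integrable (fun x => ‖a - x‖ ^ 2) μ := by
  have hid : MemLp id 2 μ :=
    (memLp_two_iff_integrable_sq_norm measurable_id.aestronglyMeasurable).mpr hmom
  exact ((memLp_const a).sub hid).integrable_norm_pow two_ne_zero

theorem cost_strict_improvement_general
    (n : ℕ)
    (μ : Measure (EuclideanSpace ℝ (Fin n))) [IsProbabilityMeasure μ]
    (hmom : Integrable (fun x => ‖x‖ ^ 2) μ) :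
    (∀ a b : EuclideanSpace ℝ (Fin n), a ≠ b →
      0 < μ {x | ‖b - x‖ < ‖a - x‖} →
      ∫ x, min (‖a - x‖ ^ 2) (‖b - x‖ ^ 2) ∂μ < ∫ x, ‖a - x‖ ^ 2 ∂μ) ∧
    (∀ b : EuclideanSpace ℝ (Fin n), (∫ y, y ∂μ) ≠ b →
      0 < μ {x | ‖b - x‖ < ‖(∫ y, y ∂μ) - x‖} →
      ∫ x, min (‖(∫ y, y ∂μ) - x‖ ^ 2) (‖b - x‖ ^ 2) ∂μ <
        ∫ x, ‖x - (∫ y, y ∂μ)‖ ^ 2 ∂μ) := by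
  have improvement : ∀ a b : EuclideanSpace ℝ (Fin n), 0 < μ {x | ‖b - x‖ < ‖a - x‖} →
      ∫ x, min (‖a - x‖ ^ 2) (‖b - x‖ ^ 2) ∂μ < ∫ x, ‖a - x‖ ^ 2 ∂μ := fun a b hpos =>
    integral_min_lt_integral_left (integrable_norm_sub_sq_of_integrable_norm_sq hmom a)
      (integrable_norm_sub_sq_of_integrable_norm_sq hmom b)
      (hpos.trans_le (measure_mono fun x (hx : ‖b - x‖ < ‖a - x‖) =>
        pow_lt_pow_left₀ hx (norm_nonneg _) two_ne_zero))
  refine ⟨fun a b _ => improvement a b, fun b _ hpos => ?_⟩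
  simpa only [norm_sub_rev _ (∫ y, y ∂μ)] using improvement _ b hpos

/-- If `a ≠ b` and the Voronoi region of `b` has positive measure, then the
two-estimator cost strictly improves on the single-estimator MSE of `a`:
`J(a,b) < ∫ ‖a − x‖² dμ`. In particular, for `a = m` the mean, if
`μ(V₂(m,b)) > 0` then `J(m,b) < J_MS`. -/
theorem cost_strict_improvement
    (n : ℕ) (hn : 1 ≤ n)
    (μ : Measure (EuclideanSpace ℝ (Fin n))) [IsProbabilityMeasure μ]
    (hac : μ ≪ volume)
    (hmom : Integrable (fun x => ‖x‖ ^ 2) μ) :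
    (∀ a b : EuclideanSpace ℝ (Fin n), a ≠ b →
      0 < μ {x | ‖b - x‖ < ‖a - x‖} →
      ∫ x, min (‖a - x‖ ^ 2) (‖b - x‖ ^ 2) ∂μ < ∫ x, ‖a - x‖ ^ 2 ∂μ) ∧
    (∀ b : EuclideanSpace ℝ (Fin n), (∫ y, y ∂μ) ≠ b →
      0 < μ {x | ‖b - x‖ < ‖(∫ y, y ∂μ) - x‖} →
      ∫ x, min (‖(∫ y, y ∂μ) - x‖ ^ 2) (‖b - x‖ ^ 2) ∂μ <
        ∫ x, ‖x - (∫ y, y ∂μ)‖ ^ 2 ∂μ) :=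
  cost_strict_improvement_general n μ hmom
end

section
/- For any fixed b ∈ ℝⁿ, the function a ↦ J(a, b) is differentiable at every a ≠ b, and its gradient there equals 2(a · μ(V₁(a, b)) − ∫_{V₁(a, b)} x dμ(x)); that is, the Fréchet derivative at a is the linear map v ↦ 2⟨a · μ(V₁(a, b)) − ∫_{V₁(a, b)} x dμ(x), v⟩. -/
/-!
Off the bisector `‖a - x‖ = ‖b - x‖`, the integrand `a' ↦ min (‖a' - x‖²) (‖b - x‖²)` is near `a`
either `‖a' - x‖²` or constant, so its derivative at `a` is `2⟪a - x, ·⟫` on `V₁(a, b)` and `0`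
elsewhere. The bisector is a proper affine hyperplane, hence `μ`-null since `μ ≪ volume`, and the
integrands are Lipschitz near `a` with constant `2‖a - x‖ + 1`, which is integrable under a finite
second moment. Differentiation under the integral sign then gives the formula.
-/

open MeasureTheory Metric

variable {E : Type*} [NormedAddCommGroup E]

def voronoiCell (a b : E) : Set E := {x | ‖a - x‖ < ‖b - x‖}

theorem isOpen_voronoiCell (a b : E) : IsOpen (voronoiCell a b) :=
  isOpen_lt (continuous_const.sub continuous_id).norm (continuous_const.sub continuous_id).norm

theorem abs_min_norm_sub_sq_sub_le (a a' x : E) (c : ℝ) :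
    |min (‖a' - x‖ ^ 2) c - min (‖a - x‖ ^ 2) c| ≤ (2 * ‖a - x‖ + ‖a' - a‖) * ‖a' - a‖ := by
  have hmin : |min (‖a' - x‖ ^ 2) c - min (‖a - x‖ ^ 2) c| ≤ |‖a' - x‖ ^ 2 - ‖a - x‖ ^ 2| := by
    simpa using abs_min_sub_min_le_max (‖a' - x‖ ^ 2) c (‖a - x‖ ^ 2) c
  have hdiff : |‖a' - x‖ - ‖a - x‖| ≤ ‖a' - a‖ := by
    simpa using abs_norm_sub_norm_le (a' - x) (a - x)
  have hsum : ‖a' - x‖ + ‖a - x‖ ≤ 2 * ‖a - x‖ + ‖a' - a‖ := by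
    linarith [(abs_le.mp hdiff).2]
  calc _ ≤ |‖a' - x‖ ^ 2 - ‖a - x‖ ^ 2| := hmin
    _ = |‖a' - x‖ - ‖a - x‖| * (‖a' - x‖ + ‖a - x‖) := by
      rw [sq_sub_sq, abs_mul, abs_of_nonneg (by positivity), mul_comm]
    _ ≤ ‖a' - a‖ * (2 * ‖a - x‖ + ‖a' - a‖) :=
      mul_le_mul hdiff hsum (by positivity) (norm_nonneg _)
    _ = _ := mul_comm _ _

variable [InnerProductSpace ℝ E]

theorem hasFDerivAt_min_norm_sub_sq {a b x : E} (hx : ‖a - x‖ ≠ ‖b - x‖) :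
    HasFDerivAt (fun a' => min (‖a' - x‖ ^ 2) (‖b - x‖ ^ 2))
      ((voronoiCell a b).indicator (fun x => (2 : ℝ) • innerSL ℝ (a - x)) x) a := by
  rcases hx.lt_or_gt with hlt | hgt
  · rw [Set.indicator_of_mem (show x ∈ voronoiCell a b from hlt)]
    have hnear : ∀ᶠ a' in nhds a, ‖a' - x‖ < ‖b - x‖ :=
      (isOpen_lt (continuous_id.sub continuous_const).norm continuous_const).mem_nhds hlt
    have hsq : HasFDerivAt (fun a' : E => ‖a' - x‖ ^ 2) ((2 : ℝ) • innerSL ℝ (a - x)) a := by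
      have h := ((hasFDerivAt_id a).sub_const x).norm_sq
      rwa [ContinuousLinearMap.comp_id, ← ofNat_smul_eq_nsmul (R := ℝ)] at h
    refine hsq.congr_of_eventuallyEq ?_
    filter_upwards [hnear] with a' ha'
    exact min_eq_left (pow_le_pow_left₀ (norm_nonneg _) ha'.le 2)
  · rw [Set.indicator_of_notMem (show x ∉ voronoiCell a b from hgt.not_gt)]
    have hnear : ∀ᶠ a' in nhds a, ‖b - x‖ < ‖a' - x‖ :=
      (isOpen_lt continuous_const (continuous_id.sub continuous_const).norm).mem_nhds hgt
    refine (hasFDerivAt_const (‖b - x‖ ^ 2) a).congr_of_eventuallyEq ?_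
    filter_upwards [hnear] with a' ha'
    exact min_eq_right (pow_le_pow_left₀ (norm_nonneg _) ha'.le 2)

variable [MeasurableSpace E] [BorelSpace E]

theorem measure_setOf_norm_sub_eq_eq_zero [FiniteDimensional ℝ E] {μ ν : Measure E}
    [ν.IsAddHaarMeasure] (hμ : μ ≪ ν) {a b : E} (hab : a ≠ b) :
    μ {x | ‖a - x‖ = ‖b - x‖} = 0 := by
  have hbisector : {x | ‖a - x‖ = ‖b - x‖} = (AffineSubspace.perpBisector a b : Set E) := by
    ext x
    simp [AffineSubspace.mem_perpBisector_iff_dist_eq', dist_eq_norm]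
  rw [hbisector]
  exact hμ (Measure.addHaar_affineSubspace ν _ (mt AffineSubspace.perpBisector_eq_top.mp hab))

theorem integral_indicator_voronoiCell_innerSL [CompleteSpace E] {μ : Measure E}
    [IsFiniteMeasure μ] (hμ : Integrable id μ) (a b : E) :
    ∫ x, (voronoiCell a b).indicator (fun x => (2 : ℝ) • innerSL ℝ (a - x)) x ∂μ =
      (2 : ℝ) • innerSL ℝ (μ.real (voronoiCell a b) • a - ∫ x in voronoiCell a b, x ∂μ) := by
  have hid : Integrable (fun x => x) (μ.restrict (voronoiCell a b)) := hμ.restrict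
  have hsub : Integrable (fun x => a - x) (μ.restrict (voronoiCell a b)) :=
    (integrable_const a).sub hid
  rw [integral_indicator (isOpen_voronoiCell a b).measurableSet, integral_smul,
    ContinuousLinearMap.integral_comp_comm _ hsub,
    integral_sub (integrable_const a) hid,
    setIntegral_const]

theorem hasFDerivAt_integral_min_norm_sub_sq [CompleteSpace E]
    {μ : Measure E} [IsFiniteMeasure μ] (hμ : MemLp id 2 μ) {a b : E}
    (hnull : μ {x | ‖a - x‖ = ‖b - x‖} = 0) :
    HasFDerivAt (fun a' => ∫ x, min (‖a' - x‖ ^ 2) (‖b - x‖ ^ 2) ∂μ)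
      ((2 : ℝ) • innerSL ℝ (μ.real (voronoiCell a b) • a - ∫ x in voronoiCell a b, x ∂μ)) a := by
  have hcont : ∀ a' : E, Continuous fun x : E => min (‖a' - x‖ ^ 2) (‖b - x‖ ^ 2) := fun a' =>
    ((continuous_const.sub continuous_id).norm.pow 2).min
      ((continuous_const.sub continuous_id).norm.pow 2)
  have hμ₁ : Integrable id μ := hμ.integrable one_le_two
  have hint_min : Integrable (fun x => min (‖a - x‖ ^ 2) (‖b - x‖ ^ 2)) μ := by
    have hsq : Integrable (fun x => ‖b - x‖ ^ 2) μ :=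
      ((memLp_const b).sub hμ).integrable_norm_pow two_ne_zero
    refine hsq.mono' (hcont a).aestronglyMeasurable (ae_of_all _ fun x => ?_)
    rw [Real.norm_of_nonneg (by positivity)]
    exact min_le_right _ _
  have hbound : Integrable (fun x => 2 * ‖a - x‖ + 1) μ :=
    (((integrable_const a).sub hμ₁).norm.const_mul 2).add (integrable_const 1)
  have hlocal_lip : ∀ᵐ x ∂μ, ∀ a' ∈ ball a 1,
      ‖min (‖a' - x‖ ^ 2) (‖b - x‖ ^ 2) - min (‖a - x‖ ^ 2) (‖b - x‖ ^ 2)‖ ≤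
        (2 * ‖a - x‖ + 1) * ‖a' - a‖ := by
    refine ae_of_all _ fun x a' ha' => (abs_min_norm_sub_sq_sub_le a a' x _).trans ?_
    gcongr
    exact (mem_ball_iff_norm.mp ha').le
  have hdiff : ∀ᵐ x ∂μ, HasFDerivAt (fun a' => min (‖a' - x‖ ^ 2) (‖b - x‖ ^ 2))
      ((voronoiCell a b).indicator (fun x => (2 : ℝ) • innerSL ℝ (a - x)) x) a :=
    (measure_eq_zero_iff_ae_notMem.mp hnull).mono fun x hx => hasFDerivAt_min_norm_sub_sq hx
  have hmeas : AEStronglyMeasurable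
      ((voronoiCell a b).indicator (fun x : E => (2 : ℝ) • innerSL ℝ (a - x))) μ :=
    (((innerSL ℝ).continuous.comp_aestronglyMeasurable
      (aestronglyMeasurable_const.sub hμ₁.1)).const_smul (2 : ℝ)).indicator
      (isOpen_voronoiCell a b).measurableSet
  rw [← integral_indicator_voronoiCell_innerSL hμ₁]
  exact (hasFDerivAt_integral_of_dominated_loc_of_lip' (ball_mem_nhds a one_pos)
    (fun a' _ => (hcont a').aestronglyMeasurable) hint_min hmeas hlocal_lip hbound hdiff).2

theorem cost_hasFDerivAt_general
    (n : ℕ)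
    (μ : Measure (EuclideanSpace ℝ (Fin n))) [IsProbabilityMeasure μ]
    (hac : μ ≪ volume)
    (hmom : Integrable (fun x => ‖x‖ ^ 2) μ)
    (b : EuclideanSpace ℝ (Fin n)) (a : EuclideanSpace ℝ (Fin n)) (hab : a ≠ b) :
    HasFDerivAt (fun a' : EuclideanSpace ℝ (Fin n) =>
        ∫ x, min (‖a' - x‖ ^ 2) (‖b - x‖ ^ 2) ∂μ)
      ((2 : ℝ) • innerSL ℝ
        ((μ {x | ‖a - x‖ < ‖b - x‖}).toReal • a -
          ∫ x in {x | ‖a - x‖ < ‖b - x‖}, x ∂μ))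
      a :=
  hasFDerivAt_integral_min_norm_sub_sq
    ((memLp_two_iff_integrable_sq_norm aestronglyMeasurable_id).mpr hmom)
    (measure_setOf_norm_sub_eq_eq_zero hac hab)

/-- For fixed `b`, the map `a ↦ J(a,b)` is differentiable at every `a ≠ b`, with
Fréchet derivative the linear map
`v ↦ 2⟨a·μ(V₁(a,b)) − ∫_{V₁(a,b)} x dμ, v⟩`. -/
theorem cost_hasFDerivAt
    (n : ℕ) (hn : 1 ≤ n)
    (μ : Measure (EuclideanSpace ℝ (Fin n))) [IsProbabilityMeasure μ]
    (hac : μ ≪ volume)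
    (hmom : Integrable (fun x => ‖x‖ ^ 2) μ)
    (b : EuclideanSpace ℝ (Fin n)) (a : EuclideanSpace ℝ (Fin n)) (hab : a ≠ b) :
    HasFDerivAt (fun a' : EuclideanSpace ℝ (Fin n) =>
        ∫ x, min (‖a' - x‖ ^ 2) (‖b - x‖ ^ 2) ∂μ)
      ((2 : ℝ) • innerSL ℝ
        ((μ {x | ‖a - x‖ < ‖b - x‖}).toReal • a -
          ∫ x in {x | ‖a - x‖ < ‖b - x‖}, x ∂μ))
      a :=
  cost_hasFDerivAt_general n μ hac hmom b a hab
end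

section
/- For every d ∈ ℝ, ∫ min((m − d/2 − x)², (m + d/2 − x)²) dγ(x) = σ² + d²/4 − |d| · σ · √(2/π). -/
open MeasureTheory ProbabilityTheory Real Set
open scoped NNReal

/-!
Choosing the nearer of the two estimators `m ∓ h` gives
`min ((m - h - x)², (m + h - x)²) = (x - m)² + h² - 2|h||x - m|`, so the cost is
`σ² + h² - 2|h| E|X - m|`. The mean absolute deviation of a Gaussian is `σ √(2/π)`,
which comes down to `∫₀^∞ x exp(-b x²) dx = 1 / (2b)`.
-/

lemma min_sq_sub_sq_eq (a h x : ℝ) :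
    min ((a - h - x) ^ 2) ((a + h - x) ^ 2) = (x - a) ^ 2 + h ^ 2 - 2 * |h| * |x - a| := by
  rw [mul_assoc, ← abs_mul]
  rcases le_total 0 (h * (x - a)) with hpos | hneg
  · rw [abs_of_nonneg hpos, min_eq_right (by nlinarith)]; ring
  · rw [abs_of_nonpos hneg, min_eq_left (by nlinarith)]; ring

lemma integral_Ioi_mul_exp_neg_mul_sq {b : ℝ} (hb : 0 < b) :
    ∫ x in Ioi 0, x * exp (-b * x ^ 2) = (2 * b)⁻¹ := by
  have h := integral_mul_cexp_neg_mul_sq (b := (b : ℂ)) (by simpa using hb)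
  rw [← Complex.ofReal_ofNat, ← Complex.ofReal_mul, ← Complex.ofReal_inv] at h
  refine Complex.ofReal_injective (Eq.trans ?_ h)
  rw [← integral_complex_ofReal]
  push_cast
  rfl

lemma integral_abs_mul_exp_neg_mul_sq {b : ℝ} (hb : 0 < b) :
    ∫ x, |x| * exp (-b * x ^ 2) = b⁻¹ := by
  have h := integral_comp_abs (f := fun x ↦ x * exp (-b * x ^ 2))
  simp only [sq_abs] at h
  rw [h, integral_Ioi_mul_exp_neg_mul_sq hb]
  field_simp

lemma integral_abs_gaussianReal_zero (v : ℝ≥0) :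
    ∫ x, |x| ∂gaussianReal 0 v = √v * √(2 / π) := by
  rcases eq_or_ne v 0 with rfl | hv
  · simp [gaussianReal_zero_var]
  have hv' : (0 : ℝ) < v := by positivity
  have hπ : 0 < √π := sqrt_pos.2 pi_pos
  have hexp (x : ℝ) : -x ^ 2 / (2 * v) = -(2 * v : ℝ)⁻¹ * x ^ 2 := by ring
  rw [integral_gaussianReal_eq_integral_smul hv]
  simp only [gaussianPDFReal, sub_zero, smul_eq_mul, hexp, mul_assoc, integral_const_mul,
    fun x : ℝ ↦ mul_comm (rexp (-(2 * v : ℝ)⁻¹ * x ^ 2)) |x|]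
  rw [integral_abs_mul_exp_neg_mul_sq (by positivity), inv_inv, sqrt_mul zero_le_two,
    sqrt_mul pi_pos.le, sqrt_div' _ pi_pos.le]
  field_simp
  rw [sq_sqrt zero_le_two, sq_sqrt hv'.le]

lemma integral_abs_sub_gaussianReal (μ : ℝ) (v : ℝ≥0) :
    ∫ x, |x - μ| ∂gaussianReal μ v = √v * √(2 / π) := by
  rw [← integral_abs_gaussianReal_zero v, ← sub_self μ, ← gaussianReal_map_sub_const μ,
    integral_map (by fun_prop) (by fun_prop)]

lemma integral_sq_sub_gaussianReal (μ : ℝ) (v : ℝ≥0) :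
    ∫ x, (x - μ) ^ 2 ∂gaussianReal μ v = v := by
  have h := variance_eq_integral (X := fun x ↦ x) (μ := gaussianReal μ v) aemeasurable_id
  rwa [variance_fun_id_gaussianReal, integral_id_gaussianReal, eq_comm] at h

lemma integral_min_sq_gaussianReal (μ : ℝ) (v : ℝ≥0) (h : ℝ) :
    ∫ x, min ((μ - h - x) ^ 2) ((μ + h - x) ^ 2) ∂gaussianReal μ v =
      v + h ^ 2 - 2 * |h| * √v * √(2 / π) := by
  have hsq : Integrable (fun x ↦ (x - μ) ^ 2) (gaussianReal μ v) :=
    ((memLp_id_gaussianReal 2).sub (memLp_const μ)).integrable_sq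
  have habs : Integrable (fun x ↦ |x - μ|) (gaussianReal μ v) :=
    ((memLp_id_gaussianReal 1).integrable le_rfl).sub (integrable_const μ) |>.abs
  simp only [min_sq_sub_sq_eq]
  rw [integral_sub ?_ (habs.const_mul _), integral_add hsq (integrable_const _),
    integral_const_mul, integral_sq_sub_gaussianReal, integral_abs_sub_gaussianReal,
    integral_const, probReal_univ, smul_eq_mul, one_mul]
  · ring
  · exact hsq.add (integrable_const _)

/-- For a Gaussian measure `γ` on `ℝ` with mean `m` and variance `σ²`, for every
`d ∈ ℝ`,
`∫ min((m − d/2 − x)², (m + d/2 − x)²) dγ = σ² + d²/4 − |d|·σ·√(2/π)`. -/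
theorem gaussian_symmetric_two_estimator_cost
    (m σ : ℝ) (hσ : 0 < σ)
    (γ : Measure ℝ) (hγ : γ = gaussianReal m ⟨σ ^ 2, sq_nonneg σ⟩)
    (d : ℝ) :
    ∫ x, min ((m - d / 2 - x) ^ 2) ((m + d / 2 - x) ^ 2) ∂γ =
      σ ^ 2 + d ^ 2 / 4 - |d| * σ * Real.sqrt (2 / Real.pi) := by
  subst hγ
  refine (integral_min_sq_gaussianReal m ⟨σ ^ 2, sq_nonneg σ⟩ (d / 2)).trans ?_
  show σ ^ 2 + (d / 2) ^ 2 - 2 * |d / 2| * √(σ ^ 2) * √(2 / π) = _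
  rw [sqrt_sq hσ.le, abs_div, abs_two]
  ring
end

section
/- For every d ≥ 0, ∫ min((m − x)², (m + d − x)²) dγ(x) = σ² + d²/2 − d · [ (d/2)(2Φ(d/(2σ)) − 1) + 2σ φ(d/(2σ)) ]. -/
/-!
Writing `x = m + σ z` with `z` standard normal and `t = d / (2σ)`, the two squared errors cross at
`z = t`, and `min (y², (y - d)²) = y² - 2 d (y - d/2)⁺`. The cost is therefore
`σ² E[z²] - 2 d σ E[(z - t)⁺]`, and `E[(z - t)⁺] = φ(t) - t (1 - Φ(t))` because `-φ` is an
antiderivative of `z φ(z)`.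
-/

open MeasureTheory ProbabilityTheory

/-- The standard normal probability density function. -/
noncomputable def stdGaussianPDF (x : ℝ) : ℝ :=
  Real.exp (-x ^ 2 / 2) / Real.sqrt (2 * Real.pi)

/-- The standard normal cumulative distribution function. -/
noncomputable def stdGaussianCDF (x : ℝ) : ℝ :=
  ∫ t in Set.Iic x, stdGaussianPDF t

open Real Filter Set Topology

lemma gaussianPDFReal_zero_one : gaussianPDFReal 0 1 = stdGaussianPDF := by
  ext x
  simp [gaussianPDFReal, stdGaussianPDF, div_eq_inv_mul, mul_comm]

lemma stdGaussianPDF_eq_exp_mul (x : ℝ) :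
    stdGaussianPDF x = exp (-(1 / 2) * x ^ 2) * (√(2 * π))⁻¹ := by
  rw [stdGaussianPDF, div_eq_mul_inv]
  congr 2
  ring

lemma integrable_stdGaussianPDF : Integrable stdGaussianPDF :=
  gaussianPDFReal_zero_one ▸ integrable_gaussianPDFReal 0 1

lemma integrable_id_mul_stdGaussianPDF : Integrable fun x ↦ x * stdGaussianPDF x := by
  refine ((integrable_mul_exp_neg_mul_sq (b := 1 / 2) (by norm_num)).mul_const
    (√(2 * π))⁻¹).congr (ae_of_all _ fun x ↦ ?_)
  simp only [stdGaussianPDF_eq_exp_mul]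
  ring

lemma hasDerivAt_stdGaussianPDF (x : ℝ) :
    HasDerivAt stdGaussianPDF (-x * stdGaussianPDF x) x := by
  have hexp : HasDerivAt (fun x : ℝ ↦ -x ^ 2 / 2) (-x) x := by
    refine ((hasDerivAt_pow 2 x).neg.div_const 2).congr_deriv ?_
    ring
  refine (hexp.exp.div_const (√(2 * π))).congr_deriv ?_
  rw [stdGaussianPDF]
  ring

lemma tendsto_stdGaussianPDF_atTop : Tendsto stdGaussianPDF atTop (𝓝 0) := by
  have hexp : Tendsto (fun x : ℝ ↦ -x ^ 2 / 2) atTop atBot :=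
    (tendsto_neg_atBot_iff.2 (tendsto_pow_atTop two_ne_zero)).atBot_div_const two_pos
  have h := (tendsto_exp_atBot.comp hexp).div_const (√(2 * π))
  rwa [zero_div] at h

lemma setIntegral_Ioi_stdGaussianPDF (t : ℝ) :
    ∫ x in Ioi t, stdGaussianPDF x = 1 - stdGaussianCDF t := by
  have htotal := intervalIntegral.integral_Iic_add_Ioi (b := t)
    integrable_stdGaussianPDF.integrableOn integrable_stdGaussianPDF.integrableOn
  rw [← gaussianPDFReal_zero_one, integral_gaussianPDFReal_eq_one 0 one_ne_zero,
    gaussianPDFReal_zero_one] at htotal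
  rw [stdGaussianCDF]
  linarith

lemma setIntegral_Ioi_id_mul_stdGaussianPDF (t : ℝ) :
    ∫ x in Ioi t, x * stdGaussianPDF x = stdGaussianPDF t := by
  have hderiv : ∀ x ∈ Ici t, HasDerivAt (fun y ↦ -stdGaussianPDF y) (x * stdGaussianPDF x) x :=
    fun x _ ↦ (hasDerivAt_stdGaussianPDF x).neg.congr_deriv (by ring)
  rw [integral_Ioi_of_hasDerivAt_of_tendsto' hderiv integrable_id_mul_stdGaussianPDF.integrableOn
    tendsto_stdGaussianPDF_atTop.neg]
  ring

lemma integral_max_sub_zero_stdGaussian (t : ℝ) :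
    ∫ x, max (x - t) 0 ∂gaussianReal 0 1 = stdGaussianPDF t - t * (1 - stdGaussianCDF t) := by
  have hvanish : ∀ x ∉ Ioi t, stdGaussianPDF x • max (x - t) 0 = 0 := fun x hx ↦ by
    rw [mem_Ioi, not_lt] at hx
    rw [max_eq_right (sub_nonpos.2 hx), smul_zero]
  calc ∫ x, max (x - t) 0 ∂gaussianReal 0 1
      = ∫ x in Ioi t, (x * stdGaussianPDF x - t * stdGaussianPDF x) := by
        rw [integral_gaussianReal_eq_integral_smul one_ne_zero, gaussianPDFReal_zero_one,
          ← setIntegral_eq_integral_of_forall_compl_eq_zero hvanish]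
        refine setIntegral_congr_fun measurableSet_Ioi fun x hx ↦ ?_
        rw [smul_eq_mul, max_eq_left (sub_nonneg.2 (le_of_lt hx))]
        ring
    _ = stdGaussianPDF t - t * (1 - stdGaussianCDF t) := by
        rw [integral_sub integrable_id_mul_stdGaussianPDF.integrableOn
          (integrable_stdGaussianPDF.const_mul t).integrableOn, integral_const_mul,
          setIntegral_Ioi_id_mul_stdGaussianPDF, setIntegral_Ioi_stdGaussianPDF]

lemma integral_sub_sq_gaussianReal (μ : ℝ) (v : NNReal) :
    ∫ x, (x - μ) ^ 2 ∂gaussianReal μ v = v := by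
  rw [← variance_fun_id_gaussianReal, variance_eq_integral measurable_id'.aemeasurable,
    integral_id_gaussianReal]

lemma gaussianReal_eq_map_stdGaussian (m σ : ℝ) :
    gaussianReal m ⟨σ ^ 2, sq_nonneg σ⟩ = (gaussianReal 0 1).map (fun z ↦ σ * z + m) := by
  rw [show (fun z ↦ σ * z + m) = (fun z ↦ z + m) ∘ (fun z ↦ σ * z) from rfl,
    ← Measure.map_map (measurable_add_const m) (measurable_const_mul σ),
    gaussianReal_map_const_mul, gaussianReal_map_add_const]
  congr 1
  · ring
  · exact (mul_one _).symm

lemma min_sq_sq_sub_eq_sq_sub_mul_max (y : ℝ) {d : ℝ} (hd : 0 ≤ d) :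
    min (y ^ 2) ((y - d) ^ 2) = y ^ 2 - 2 * d * max (y - d / 2) 0 := by
  rcases le_total y (d / 2) with hy | hy
  · rw [min_eq_left (by nlinarith), max_eq_right (by linarith)]
    ring
  · rw [min_eq_right (by nlinarith), max_eq_left (by linarith)]
    ring

/-- For a Gaussian measure `γ` on `ℝ` with mean `m` and variance `σ²`, for every
`d ≥ 0`,
`∫ min((m − x)², (m + d − x)²) dγ
  = σ² + d²/2 − d·[(d/2)(2Φ(d/(2σ)) − 1) + 2σφ(d/(2σ))]`. -/
theorem gaussian_hierarchical_cost_formula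
    (m σ : ℝ) (hσ : 0 < σ)
    (γ : Measure ℝ) (hγ : γ = gaussianReal m ⟨σ ^ 2, sq_nonneg σ⟩)
    (d : ℝ) (hd : 0 ≤ d) :
    ∫ x, min ((m - x) ^ 2) ((m + d - x) ^ 2) ∂γ =
      σ ^ 2 + d ^ 2 / 2 -
        d * ((d / 2) * (2 * stdGaussianCDF (d / (2 * σ)) - 1) +
          2 * σ * stdGaussianPDF (d / (2 * σ))) := by
  set t := d / (2 * σ)
  have hd_eq : 2 * σ * t = d := by
    simp only [t]
    field_simp
  have hintegrand (z : ℝ) : min ((m - (σ * z + m)) ^ 2) ((m + d - (σ * z + m)) ^ 2)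
      = σ ^ 2 * z ^ 2 - 2 * d * σ * max (z - t) 0 := by
    rw [show (m - (σ * z + m)) ^ 2 = (σ * z) ^ 2 by ring,
      show (m + d - (σ * z + m)) ^ 2 = (σ * z - d) ^ 2 by ring, min_sq_sq_sub_eq_sq_sub_mul_max _ hd,
      show σ * z - d / 2 = σ * (z - t) by rw [← hd_eq]; ring,
      show max (σ * (z - t)) 0 = σ * max (z - t) 0 by rw [mul_max_of_nonneg _ _ hσ.le, mul_zero]]
    ring
  have hsq : ∫ z, z ^ 2 ∂gaussianReal 0 1 = 1 := by
    simpa using integral_sub_sq_gaussianReal 0 1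
  rw [hγ, gaussianReal_eq_map_stdGaussian, integral_map (by fun_prop) (by fun_prop)]
  simp only [hintegrand]
  have hint_sq : Integrable (fun z ↦ z ^ 2) (gaussianReal 0 1) :=
    (memLp_id_gaussianReal 2).integrable_sq
  have hint_pos : Integrable (fun z ↦ max (z - t) 0) (gaussianReal 0 1) :=
    (((memLp_id_gaussianReal 1).integrable le_rfl).sub (integrable_const t)).pos_part
  rw [integral_sub (hint_sq.const_mul _) (hint_pos.const_mul _), integral_const_mul,
    integral_const_mul, hsq, integral_max_sub_zero_stdGaussian]
  linear_combination (d * (1 - stdGaussianCDF t)) * hd_eq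
end
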